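/- arXiv:1610.08577 — 2 statements merged into one kernel-verified Lean document; each statement's English description precedes it below -/
import Mathlib

section
/- Let (Ω, μ) be a measure space and C₁ > 0. Let g, gₙ : Ω → ℝ (n ∈ ℕ) be measurable functions with g(x) ≥ C₁ and gₙ(x) ≥ C₁ for a.e. x, and set dₙ := ess sup_{x∈Ω} |gₙ(x) − g(x)|; assume dₙ ≤ C₁ for all n and dₙ → 0 as n → ∞. Let σ̃₀ ∈ L²(Ω; ℝ^{3×3}) satisfy (1/2)|σ̃₀(x)^D|² ≤ g(x) for a.e. x ∈ Ω. Define σ̃₀,ₙ := (1 − dₙ/C₁)·σ̃₀. Then for every n, (1/2)|σ̃₀,ₙ(x)^D|² ≤ gₙ(x) for a.e. x ∈ Ω, and σ̃₀,ₙ → σ̃₀ in L²(Ω; ℝ^{3×3}) as n → ∞. -/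
open MeasureTheory Filter Topology ENNReal

/-- 3×3 real matrices with the Frobenius (Euclidean) norm. -/
noncomputable abbrev Mat : Type := EuclideanSpace ℝ (Fin 3 × Fin 3)

/-- The deviator `τ^D = τ − (1/3)(tr τ)·I₃`. -/
noncomputable def matDev (τ : Mat) : Mat :=
  WithLp.toLp 2 (fun p => τ p - (∑ k : Fin 3, τ (k, k)) / 3 * (if p.1 = p.2 then 1 else 0))

lemma matDev_smul (c : ℝ) (τ : Mat) : matDev (c • τ) = c • matDev τ := by
  ext p
  simp only [matDev, PiLp.smul_apply, PiLp.toLp_apply, smul_eq_mul]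
  rw [← Finset.mul_sum]
  ring

/-- Lemma 3.2: with `dₙ = ess sup |gₙ − g| ≤ C₁`, `dₙ → 0`, the scaled elements
`σ̃₀,ₙ = (1 − dₙ/C₁)σ̃₀` satisfy the constraint at level `gₙ` and converge to `σ̃₀`
in `L²(Ω; ℝ^{3×3})`. -/
theorem initial_data_approximation {Ω : Type*} [MeasurableSpace Ω] (μ : Measure Ω)
    (C₁ : ℝ) (hC₁ : 0 < C₁) (g : Ω → ℝ) (gn : ℕ → Ω → ℝ)
    (hg : Measurable g) (hgn : ∀ n, Measurable (gn n))
    (hgC : ∀ᵐ x ∂μ, C₁ ≤ g x) (hgnC : ∀ n, ∀ᵐ x ∂μ, C₁ ≤ gn n x)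
    (d : ℕ → ℝ≥0∞)
    (hd : ∀ n, d n = essSup (fun x => ENNReal.ofReal |gn n x - g x|) μ)
    (hdC : ∀ n, d n ≤ ENNReal.ofReal C₁)
    (hdlim : Tendsto d atTop (𝓝 0))
    (σ₀ : Ω → Mat) (hσ₀ : MemLp σ₀ 2 μ)
    (hσ₀K : ∀ᵐ x ∂μ, 1 / 2 * ‖matDev (σ₀ x)‖ ^ 2 ≤ g x) :
    (∀ n, ∀ᵐ x ∂μ,
        1 / 2 * ‖matDev (((1 - (d n).toReal / C₁) • σ₀) x)‖ ^ 2 ≤ gn n x) ∧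
      Tendsto (fun n => eLpNorm ((1 - (d n).toReal / C₁) • σ₀ - σ₀) 2 μ)
        atTop (𝓝 0) := by
  have hdne : ∀ n, d n ≠ ∞ := fun n => ((hdC n).trans_lt ENNReal.ofReal_lt_top).ne
  have hdCr : ∀ n, (d n).toReal ≤ C₁ := fun n =>
    ENNReal.toReal_le_of_le_ofReal hC₁.le (hdC n)
  have hd0 : ∀ n, 0 ≤ (d n).toReal := fun n => ENNReal.toReal_nonneg
  constructor
  · intro n
    have habs : ∀ᵐ x ∂μ, ENNReal.ofReal |gn n x - g x| ≤ d n := by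
      rw [hd n]; exact ENNReal.ae_le_essSup _
    filter_upwards [habs, hgC, hσ₀K] with x hx hgx hK
    have hx' : |gn n x - g x| ≤ (d n).toReal :=
      (ENNReal.ofReal_le_iff_le_toReal (hdne n)).mp hx
    set u : ℝ := (d n).toReal / C₁ with hu
    have hu0 : 0 ≤ u := div_nonneg (hd0 n) hC₁.le
    have hu1 : u ≤ 1 := (div_le_one hC₁).mpr (hdCr n)
    have huC : u * C₁ = (d n).toReal := div_mul_cancel₀ _ hC₁.ne'
    have hsub : g x - gn n x ≤ u * C₁ := by
      rw [huC]; have := abs_sub_abs_le_abs_sub (gn n x) (g x)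
      nlinarith [neg_abs_le (gn n x - g x)]
    have heq : ‖matDev (((1 - u) • σ₀) x)‖ = (1 - u) * ‖matDev (σ₀ x)‖ := by
      have : ((1 - u) • σ₀) x = (1 - u) • σ₀ x := rfl
      rw [this, matDev_smul, norm_smul, Real.norm_eq_abs,
        abs_of_nonneg (by linarith : (0:ℝ) ≤ 1 - u)]
    rw [heq]
    nlinarith [norm_nonneg (matDev (σ₀ x)), sq_nonneg (1 - u),
      mul_nonneg hu0 (sub_nonneg.2 hgx),
      mul_nonneg (mul_nonneg hu0 (sub_nonneg.2 hu1)) (sq_nonneg ‖matDev (σ₀ x)‖)]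
  · have hEq : ∀ n, (1 - (d n).toReal / C₁) • σ₀ - σ₀
        = (-( (d n).toReal / C₁)) • σ₀ := by
      intro n; funext x
      simp [sub_smul, Pi.sub_apply, Pi.smul_apply]
    have hK : eLpNorm σ₀ 2 μ ≠ ∞ := hσ₀.2.ne
    have hnorm : ∀ n, eLpNorm ((1 - (d n).toReal / C₁) • σ₀ - σ₀) 2 μ
        = ENNReal.ofReal ((d n).toReal / C₁) * eLpNorm σ₀ 2 μ := by
      intro n
      rw [hEq n, eLpNorm_const_smul]
      congr 1
      rw [← ofReal_norm, Real.norm_eq_abs, abs_neg,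
        abs_of_nonneg (div_nonneg (hd0 n) hC₁.le)]
    simp only [hnorm]
    have ht : Tendsto (fun n => (d n).toReal / C₁) atTop (𝓝 0) := by
      have := (ENNReal.tendsto_toReal (by simp)).comp hdlim
      simpa using this.div_const C₁
    have h1 : Tendsto (fun n => ENNReal.ofReal ((d n).toReal / C₁)) atTop (𝓝 0) := by
      simpa using ENNReal.tendsto_ofReal (a := 0) ht
    simpa using ENNReal.Tendsto.mul_const h1 (Or.inr hK)
end

section
/- Let H be a real inner product space, λ > 0, τ, J, τ̃ ∈ H, and let p, q, A, B be real numbers with p ≥ 0, A ≥ 0, B ≥ 0. Assume ‖τ̃ − J‖ ≤ A·(1 + p^{1/2}) and q − p ≤ B·(1 + p). Set E := (1/(2λ))‖τ − J‖² + p. Then (1/(2λ))‖τ − τ̃‖² + q − E ≤ (‖τ − J‖/λ)·A·(1 + E^{1/2}) + (A²/λ)·(1 + E) + B·(1 + E). -/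
/-! Comparing the quadratic penalties at `τ̃` and at `J` by the triangle inequality gives
`(1/(2λ))(‖τ - τ̃‖² - ‖τ - J‖²) ≤ ‖τ - J‖ a / λ + a² / (2λ)` with `a = ‖τ̃ - J‖`. Since `p ≤ E`, the
hypotheses give `a ≤ A (1 + √E)`, `a² ≤ A² (1 + √p)² ≤ 2 A² (1 + E)` and `q - p ≤ B (1 + E)`. -/

lemma one_div_two_mul_sq_norm_sub_le {E : Type*} [SeminormedAddCommGroup E] {lam : ℝ}
    (hlam : 0 ≤ lam) (x y z : E) :
    1 / (2 * lam) * ‖x - y‖ ^ 2 ≤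
      1 / (2 * lam) * ‖x - z‖ ^ 2 + ‖x - z‖ / lam * ‖y - z‖ + ‖y - z‖ ^ 2 / (2 * lam) := by
  have htri : ‖x - y‖ ≤ ‖x - z‖ + ‖y - z‖ := by
    simpa only [dist_eq_norm] using dist_triangle_right x y z
  calc 1 / (2 * lam) * ‖x - y‖ ^ 2 ≤ 1 / (2 * lam) * (‖x - z‖ + ‖y - z‖) ^ 2 := by gcongr
    _ = _ := by ring

lemma one_add_sqrt_sq_le {p : ℝ} (hp : 0 ≤ p) : (1 + √p) ^ 2 ≤ 2 * (1 + p) := by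
  simpa only [one_pow, Real.sq_sqrt hp] using add_sq_le (a := 1) (b := √p)

/-- The Moreau–Yosida envelope comparison estimate from the proof of Proposition 3.2:
with `E = (1/(2λ))‖τ − J‖² + p`, if `‖τ̃ − J‖ ≤ A(1 + √p)` and `q − p ≤ B(1 + p)`, then
`(1/(2λ))‖τ − τ̃‖² + q − E ≤ (‖τ − J‖/λ)A(1 + √E) + (A²/λ)(1 + E) + B(1 + E)`. -/
theorem moreau_yosida_envelope_estimate {H : Type*} [NormedAddCommGroup H]
    [InnerProductSpace ℝ H] (lam : ℝ) (hlam : 0 < lam)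
    (τ J τtilde : H) (p q A B : ℝ) (hp : 0 ≤ p) (hA : 0 ≤ A) (hB : 0 ≤ B)
    (h1 : ‖τtilde - J‖ ≤ A * (1 + Real.sqrt p))
    (h2 : q - p ≤ B * (1 + p))
    (E : ℝ) (hE : E = 1 / (2 * lam) * ‖τ - J‖ ^ 2 + p) :
    1 / (2 * lam) * ‖τ - τtilde‖ ^ 2 + q - E ≤
      ‖τ - J‖ / lam * A * (1 + Real.sqrt E) + A ^ 2 / lam * (1 + E) + B * (1 + E) := by
  have hpE : p ≤ E := by
    have : 0 ≤ 1 / (2 * lam) * ‖τ - J‖ ^ 2 := by positivity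
    linarith
  have ha : ‖τtilde - J‖ ≤ A * (1 + √E) := h1.trans (by gcongr)
  have ha2 : ‖τtilde - J‖ ^ 2 ≤ 2 * A ^ 2 * (1 + E) :=
    calc ‖τtilde - J‖ ^ 2 ≤ A ^ 2 * (1 + √p) ^ 2 := by rw [← mul_pow]; gcongr
      _ ≤ A ^ 2 * (2 * (1 + p)) := by gcongr; exact one_add_sqrt_sq_le hp
      _ ≤ 2 * A ^ 2 * (1 + E) := by nlinarith [sq_nonneg A]
  have hqp : q - p ≤ B * (1 + E) := h2.trans (by gcongr)
  calc 1 / (2 * lam) * ‖τ - τtilde‖ ^ 2 + q - E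
      ≤ ‖τ - J‖ / lam * ‖τtilde - J‖ + ‖τtilde - J‖ ^ 2 / (2 * lam) + (q - p) := by
        linarith [one_div_two_mul_sq_norm_sub_le hlam.le τ τtilde J]
    _ ≤ ‖τ - J‖ / lam * (A * (1 + √E)) + 2 * A ^ 2 * (1 + E) / (2 * lam) + B * (1 + E) := by
        gcongr
    _ = _ := by field_simp
end
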